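/- Let χ_{E,V}(n) count proper colorings of a finite hypergraph (E,V) with n colors. Then for all n, m: χ_{E,V}(n·m) = Σ_{F ⊆ E} χ_{F,V}(n) · χ_{F^c, V/F}(m), where (F,V) is the sub-hypergraph on edge set F and (F^c, V/F) is the contraction described below. -/

import Mathlib

/-- A proper coloring of a hypergraph `h : E → Set V`: no edge is monochromatic. -/
def Proper {E V C : Type*} (h : E → Set V) (c : V → C) : Prop :=
  ∀ e : E, ∃ u ∈ h e, ∃ v ∈ h e, c u ≠ c v

/-- Number of proper colorings with `n` colors. -/
noncomputable def chrom {E V : Type*} (h : E → Set V) (n : ℕ) : ℕ :=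
  Nat.card {c : V → Fin n // Proper h c}

/-- Two vertices are related if they lie on a common edge belonging to `F`. -/
def touchRel {E V : Type*} (h : E → Set V) (F : Set E) (u v : V) : Prop :=
  ∃ e ∈ F, u ∈ h e ∧ v ∈ h e

/-- The setoid on `V` generated by the edges of `F`; its quotient is `V/F`. -/
def contrSetoid {E V : Type*} (h : E → Set V) (F : Set E) : Setoid V :=
  Relation.EqvGen.setoid (touchRel h F)

/-- The contracted hypergraph `(Fᶜ, V/F)`. -/
def contractH {E V : Type*} (h : E → Set V) (F : Set E) :
    {e : E // e ∉ F} → Set (Quotient (contrSetoid h F)) :=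
  fun e => Quotient.mk (contrSetoid h F) '' h e.1


/-!
Identify `Fin (n * m)` with `Fin n × Fin m`, so that a coloring is a pair `(a, b)`. The pair is
proper exactly when `a` is proper on the set `F` of edges on which `b` is constant. Sorting the
colorings `b` by this set `F`, those with monochromatic edge set exactly `F` are the colorings
constant on the components of `(F, V)` and non-constant on every other edge, i.e. the proper
colorings of the contraction `(Fᶜ, V/F)`.
-/

section Hypergraph

variable {E V : Type*} (h : E → Set V)

open Classical in
noncomputable def monochromaticEdges [Fintype E] {β : Type*} (b : V → β) : Finset E :=
  {e | ∀ u ∈ h e, ∀ v ∈ h e, b u = b v}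

variable {h}

lemma mem_monochromaticEdges [Fintype E] {β : Type*} {b : V → β} {e : E} :
    e ∈ monochromaticEdges h b ↔ ∀ u ∈ h e, ∀ v ∈ h e, b u = b v := by
  simp [monochromaticEdges]

lemma proper_comp_iff {C D : Type*} {f : C → D} (hf : Function.Injective f) {c : V → C} :
    Proper h (f ∘ c) ↔ Proper h c := by
  simp only [Proper, Function.comp, hf.ne_iff]

lemma card_proper_congr {C D : Type*} (φ : C ≃ D) :
    Nat.card {c : V → C // Proper h c} = Nat.card {c : V → D // Proper h c} :=
  Nat.card_congr <| (Equiv.arrowCongr (Equiv.refl V) φ).subtypeEquiv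
    fun _ => (proper_comp_iff φ.injective).symm

lemma proper_prodMk_iff [Fintype E] {α β : Type*} (a : V → α) (b : V → β) :
    Proper h (fun v => (a v, b v)) ↔
      Proper (fun e : (monochromaticEdges h b : Set E) => h e) a := by
  constructor
  · rintro hab ⟨e, he⟩
    obtain ⟨u, hu, v, hv, huv⟩ := hab e
    have hb := mem_monochromaticEdges.1 he u hu v hv
    exact ⟨u, hu, v, hv, fun ha => huv (Prod.ext ha hb)⟩
  · intro ha e
    by_cases he : e ∈ monochromaticEdges h b
    · obtain ⟨u, hu, v, hv, huv⟩ := ha ⟨e, he⟩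
      exact ⟨u, hu, v, hv, fun hab => huv (congrArg Prod.fst hab)⟩
    · simp only [mem_monochromaticEdges, not_forall] at he
      obtain ⟨u, hu, v, hv, huv⟩ := he
      exact ⟨u, hu, v, hv, fun hab => huv (congrArg Prod.snd hab)⟩

lemma card_proper_prod [Fintype E] [Fintype V] [DecidableEq V] {α β : Type*} [Finite α]
    [Fintype β] :
    Nat.card {c : V → α × β // Proper h c} =
      ∑ b : V → β,
        Nat.card {a : V → α // Proper (fun e : (monochromaticEdges h b : Set E) => h e) a} := by
  rw [← Nat.card_sigma]
  exact Nat.card_congr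
    { toFun c := ⟨Prod.snd ∘ c.1, Prod.fst ∘ c.1, (proper_prodMk_iff _ _).1 c.2⟩
      invFun x := ⟨fun v => (x.2.1 v, x.1 v), (proper_prodMk_iff _ _).2 x.2.2⟩
      left_inv _ := rfl
      right_inv _ := rfl }

lemma contrSetoid_le_ker [Fintype E] {β : Type*} {b : V → β} {F : Finset E}
    (hb : monochromaticEdges h b = F) : contrSetoid h F ≤ Setoid.ker b :=
  Setoid.eqvGen_le fun _ _ ⟨e, he, hu, hv⟩ =>
    mem_monochromaticEdges.1 (hb ▸ he : e ∈ monochromaticEdges h b) _ hu _ hv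

lemma monochromaticEdges_comp_mk_eq_iff [Fintype E] {β : Type*} {F : Finset E}
    (b : Quotient (contrSetoid h F) → β) :
    monochromaticEdges h (b ∘ Quotient.mk _) = F ↔ Proper (contractH h F) b := by
  constructor
  · rintro hb ⟨e, he⟩
    have hmono : e ∉ monochromaticEdges h (b ∘ Quotient.mk _) := by rwa [hb]
    simp only [mem_monochromaticEdges, not_forall] at hmono
    obtain ⟨u, hu, v, hv, huv⟩ := hmono
    exact ⟨_, ⟨u, hu, rfl⟩, _, ⟨v, hv, rfl⟩, huv⟩
  · intro hb
    ext e
    rw [mem_monochromaticEdges]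
    by_cases he : e ∈ F
    · refine iff_of_true (fun u hu v hv => ?_) he
      exact congrArg b (Quotient.sound (Relation.EqvGen.rel _ _ ⟨e, he, hu, hv⟩))
    · refine iff_of_false (fun hmono => ?_) he
      obtain ⟨_, ⟨u, hu, rfl⟩, _, ⟨v, hv, rfl⟩, huv⟩ := hb ⟨e, he⟩
      exact huv (hmono u hu v hv)

noncomputable def monochromaticEdgesFiberEquiv [Fintype E] (β : Type*) (F : Finset E) :
    {b : V → β // monochromaticEdges h b = F} ≃
      {b : Quotient (contrSetoid h F) → β // Proper (contractH h F) b} where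
  toFun b := ⟨Quotient.lift b.1 (contrSetoid_le_ker b.2),
    (monochromaticEdges_comp_mk_eq_iff _).1 b.2⟩
  invFun b := ⟨b.1 ∘ Quotient.mk _, (monochromaticEdges_comp_mk_eq_iff _).2 b.2⟩
  left_inv _ := rfl
  right_inv _ := Subtype.ext <| funext <| Quotient.ind fun _ => rfl

end Hypergraph

theorem chrom_mul_general {E V : Type*} [Fintype E] [Fintype V]
    (h : E → Set V) (n m : ℕ) :
    chrom h (n * m) =
      ∑ F : Finset E,
        chrom (fun e : (↑F : Set E) => h e) n * chrom (contractH h (↑F : Set E)) m := by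
  classical
  calc chrom h (n * m)
      = Nat.card {c : V → Fin n × Fin m // Proper h c} := card_proper_congr finProdFinEquiv.symm
    _ = ∑ b : V → Fin m, chrom (fun e : (monochromaticEdges h b : Set E) => h e) n :=
        card_proper_prod
    _ = ∑ F : Finset E, ∑ _b : {b : V → Fin m // monochromaticEdges h b = F},
          chrom (fun e : (↑F : Set E) => h e) n :=
        (Fintype.sum_fiberwise' (monochromaticEdges h)
          fun F : Finset E => chrom (fun e : (↑F : Set E) => h e) n).symm
    _ = _ := by
        refine Finset.sum_congr rfl fun F _ => ?_
        rw [Finset.sum_const, Finset.card_univ, smul_eq_mul, mul_comm, ← Nat.card_eq_fintype_card,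
          Nat.card_congr (monochromaticEdgesFiberEquiv (Fin m) F)]
        rfl

/-- `χ_{E,V}(n·m) = Σ_{F ⊆ E} χ_{F,V}(n) · χ_{Fᶜ,V/F}(m)`. -/
theorem chrom_mul {E V : Type*} [Fintype E] [Fintype V] [DecidableEq E]
    (h : E → Set V) (hne : ∀ e, (h e).Nonempty) (n m : ℕ) :
    chrom h (n * m) =
      ∑ F : Finset E,
        chrom (fun e : (↑F : Set E) => h e) n * chrom (contractH h (↑F : Set E)) m :=
  chrom_mul_general h n m
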